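/- arXiv:2104.03405 — 4 statements merged into one kernel-verified Lean document; each statement's English description precedes it below -/
import Mathlib

section
/- Let α, β be irrational with α ± β ∉ ℤ, with convergent denominators q_n and t_m respectively. Then there exist only finitely many pairs of indices (n, m) such that simultaneously q_n = t_m and q_{n+1} = t_{m+1}. -/
/-!
For `n ≥ 1` the denominators satisfy `0 < q n < q (n + 1)`, so the recurrence
`q (n + 2) = a (n + 2) * q (n + 1) + q n` is a step of the Euclidean algorithm: `q n` is the
remainder of `q (n + 2)` modulo `q (n + 1)`. Hence a coincidence
`(q n, q (n + 1)) = (t m, t (m + 1))` propagates down its diagonal. Descending to index `1` shows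
`|n - m| ≤ 1`, and on each of these three diagonals the coincidences form an initial segment.
If one of them is infinite, the partial quotients of `α` and `β` agree (`n = m`), or one expansion
is `[b₀; 1, a₁ - 1, a₂, a₃, …]` when the other is `[a₀; a₁, a₂, …]` (`|n - m| = 1`). Since an
irrational number is determined by its partial quotients, `α - β ∈ ℤ`, resp. `α + β ∈ ℤ`.
-/

theorem Irrational.fract_ne_zero {x : ℝ} (h : Irrational x) : Int.fract x ≠ 0 := by
  rw [← Int.self_sub_floor]
  exact sub_ne_zero.mpr (h.ne_int _)

def IsCompleteQuotients (u : ℕ → ℝ) : Prop :=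
  ∀ r, u (r + 1) = (Int.fract (u r))⁻¹

namespace IsCompleteQuotients

variable {u v : ℕ → ℝ}

theorem comp_add (hu : IsCompleteQuotients u) (k : ℕ) :
    IsCompleteQuotients (fun r => u (r + k)) :=
  fun r => show u (r + 1 + k) = _ by rw [Nat.add_right_comm]; exact hu (r + k)

theorem floor_add_inv (hu : IsCompleteQuotients u) (r : ℕ) :
    ⌊u r⌋ + (u (r + 1))⁻¹ = u r := by
  rw [hu r, inv_inv, Int.floor_add_fract]

theorem irrational (hu : IsCompleteQuotients u) (h₀ : Irrational (u 0)) (r : ℕ) :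
    Irrational (u r) := by
  induction r with
  | zero => exact h₀
  | succ r ih => rw [hu r, ← Int.self_sub_floor]; exact (ih.sub_intCast _).inv

theorem one_lt (hu : IsCompleteQuotients u) (h₀ : Irrational (u 0)) (r : ℕ) :
    1 < u (r + 1) := by
  have hfract : 0 < Int.fract (u r) :=
    (Int.fract_nonneg _).lt_of_ne' (hu.irrational h₀ r).fract_ne_zero
  rw [hu r]
  exact (one_lt_inv₀ hfract).mpr (Int.fract_lt_one _)

theorem one_le_floor (hu : IsCompleteQuotients u) (h₀ : Irrational (u 0)) (r : ℕ) :
    1 ≤ ⌊u (r + 1)⌋ :=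
  Int.le_floor.mpr (by exact_mod_cast (hu.one_lt h₀ r).le)

theorem of_s_get? (hu : IsCompleteQuotients u) (h₀ : Irrational (u 0)) (n : ℕ) :
    (GenContFract.of (u 0)).s.get? n = some ⟨1, ⌊u (n + 1)⌋⟩ := by
  induction n generalizing u with
  | zero =>
    rw [hu 0]
    exact GenContFract.of_s_head h₀.fract_ne_zero
  | succ n ih =>
    rw [GenContFract.of_s_succ, ← hu 0]
    exact ih (hu.comp_add 1) (hu.irrational h₀ 1)

theorem eq_of_floor_eq (hu : IsCompleteQuotients u) (hv : IsCompleteQuotients v)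
    (hu₀ : Irrational (u 0)) (hv₀ : Irrational (v 0)) (h : ∀ r, ⌊u r⌋ = ⌊v r⌋) :
    u 0 = v 0 := by
  have hof : GenContFract.of (u 0) = GenContFract.of (v 0) := by
    refine GenContFract.ext (by simp only [GenContFract.of_h_eq_floor, h 0])
      (Stream'.Seq.ext fun n => ?_)
    rw [hu.of_s_get? hu₀, hv.of_s_get? hv₀, h]
  exact tendsto_nhds_unique (GenContFract.of_convergence (u 0))
    (hof ▸ GenContFract.of_convergence (v 0))

end IsCompleteQuotients

def Coincide (q t : ℕ → ℤ) (n m : ℕ) : Prop :=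
  q n = t m ∧ q (n + 1) = t (m + 1)

theorem Coincide.symm {q t : ℕ → ℤ} {n m : ℕ} (h : Coincide q t n m) : Coincide t q m n :=
  ⟨h.1.symm, h.2.symm⟩

structure IsDenominators (a q : ℕ → ℤ) : Prop where
  one_le_partialQuot : ∀ r, 1 ≤ a (r + 1)
  zero : q 0 = 1
  one : q 1 = a 1
  add_two : ∀ k, q (k + 2) = a (k + 2) * q (k + 1) + q k

namespace IsDenominators

variable {a b q t : ℕ → ℤ}

theorem pos (hq : IsDenominators a q) (n : ℕ) : 0 < q n := by
  induction n using Nat.twoStepInduction with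
  | zero => rw [hq.zero]; exact one_pos
  | one => linarith [hq.one, hq.one_le_partialQuot 0]
  | more k ih₁ ih₂ => rw [hq.add_two k]; nlinarith [hq.one_le_partialQuot (k + 1)]

theorem one_lt (hq : IsDenominators a q) (n : ℕ) : 1 < q (n + 2) := by
  rw [hq.add_two n]; nlinarith [hq.one_le_partialQuot (n + 1), hq.pos n, hq.pos (n + 1)]

theorem lt_succ (hq : IsDenominators a q) {n : ℕ} (hn : 1 ≤ n) : q n < q (n + 1) := by
  obtain ⟨k, rfl⟩ := Nat.exists_eq_add_of_le' hn
  rw [hq.add_two k]; nlinarith [hq.one_le_partialQuot (k + 1), hq.pos k, hq.pos (k + 1)]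

theorem emod_eq (hq : IsDenominators a q) {n : ℕ} (h : q n < q (n + 1)) :
    q (n + 2) % q (n + 1) = q n := by
  rw [hq.add_two, Int.mul_add_emod_self_right, Int.emod_eq_of_lt ((hq.pos n).le) h]

theorem partialQuot_eq (hq : IsDenominators a q) (ht : IsDenominators b t) {n m : ℕ}
    (h₀ : q n = t m) (h₁ : q (n + 1) = t (m + 1)) (h₂ : q (n + 2) = t (m + 2)) :
    a (n + 2) = b (m + 2) := by
  refine mul_right_cancel₀ (hq.pos (n + 1)).ne' ?_
  linear_combination h₂ - hq.add_two n + ht.add_two m - h₀ - b (m + 2) * h₁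

theorem coincide_of_succ (hq : IsDenominators a q) (ht : IsDenominators b t) {n m : ℕ}
    (hn : 1 ≤ n) (hm : 1 ≤ m) (h : Coincide q t (n + 1) (m + 1)) : Coincide q t n m := by
  refine ⟨?_, h.1⟩
  rw [← hq.emod_eq (hq.lt_succ hn), ← ht.emod_eq (ht.lt_succ hm), h.1, h.2]

theorem coincide_of_add (hq : IsDenominators a q) (ht : IsDenominators b t) {n m k₀ k : ℕ}
    (hn : 1 ≤ n) (hm : 1 ≤ m) (hk : k₀ ≤ k) (h : Coincide q t (k + n) (k + m)) :
    Coincide q t (k₀ + n) (k₀ + m) := by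
  induction k, hk using Nat.le_induction with
  | base => exact h
  | succ k _ ih =>
    refine ih (coincide_of_succ hq ht (by omega) (by omega) ?_)
    rwa [Nat.add_right_comm k 1 n, Nat.add_right_comm k 1 m] at h

theorem not_coincide_add_three_one (hq : IsDenominators a q) (ht : IsDenominators b t) (d : ℕ) :
    ¬ Coincide q t (d + 3) 1 := by
  rintro ⟨h₁, h₂⟩
  have ht₀ : t 0 < t 1 := by rw [ht.zero, ← h₁]; exact hq.one_lt (d + 1)
  have := hq.emod_eq (hq.lt_succ (n := d + 2) (by omega))
  rw [h₁, h₂, ht.emod_eq ht₀, ht.zero] at this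
  exact (hq.one_lt d).ne this

theorem le_add_one_of_coincide (hq : IsDenominators a q) (ht : IsDenominators b t) {n m : ℕ}
    (h : Coincide q t n m) : n ≤ m + 1 := by
  by_contra! hnm
  rcases m with _ | m
  · obtain ⟨d, rfl⟩ : ∃ d, n = d + 2 := ⟨n - 2, by omega⟩
    exact (hq.one_lt d).ne' (h.1.trans ht.zero)
  · obtain ⟨d, rfl⟩ : ∃ d, n = m + (d + 3) := ⟨n - m - 3, by omega⟩
    have := coincide_of_add hq ht (k₀ := 0) (by omega) le_rfl (Nat.zero_le m) h
    exact not_coincide_add_three_one hq ht d (by simpa using this)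

theorem lt_of_not_coincide (hq : IsDenominators a q) (ht : IsDenominators b t) {i j N k : ℕ}
    (hi : 1 ≤ i) (hj : 1 ≤ j) (hN : ¬ Coincide q t (N + i) (N + j))
    (h : Coincide q t (k + i) (k + j)) : k < N := by
  by_contra! hle
  exact hN (coincide_of_add hq ht hi hj hle h)

theorem finite_setOf_coincide (hq : IsDenominators a q) (ht : IsDenominators b t)
    {N₀ N₁ N₂ : ℕ} (h₀ : ¬ Coincide q t (N₀ + 1) (N₀ + 1)) (h₁ : ¬ Coincide q t (N₁ + 1) (N₁ + 2))
    (h₂ : ¬ Coincide q t (N₂ + 2) (N₂ + 1)) :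
    {p : ℕ × ℕ | Coincide q t p.1 p.2}.Finite := by
  refine (Set.finite_Iic (N₀ + N₁ + N₂ + 2, N₀ + N₁ + N₂ + 3)).subset ?_
  rintro ⟨n, m⟩ h
  have hnm := le_add_one_of_coincide hq ht h
  have hmn := le_add_one_of_coincide ht hq h.symm
  suffices n ≤ N₀ + N₁ + N₂ + 2 from ⟨this, by dsimp only; omega⟩
  rcases n with _ | n
  · omega
  rcases m with _ | m
  · omega
  obtain rfl | rfl | rfl : m = n ∨ m = n + 1 ∨ n = m + 1 := by omega
  · have := lt_of_not_coincide hq ht le_rfl le_rfl h₀ h; omega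
  · have := lt_of_not_coincide hq ht le_rfl one_le_two h₁ h; omega
  · have := lt_of_not_coincide hq ht one_le_two le_rfl h₂ h; omega

end IsDenominators

section

variable {u v : ℕ → ℝ} {q t : ℕ → ℤ}

theorem exists_sub_eq_intCast_of_denominators_eq
    (hu : IsCompleteQuotients u) (hv : IsCompleteQuotients v)
    (hu₀ : Irrational (u 0)) (hv₀ : Irrational (v 0))
    (hq : IsDenominators (⌊u ·⌋) q) (ht : IsDenominators (⌊v ·⌋) t)
    (h : ∀ k, q (k + 1) = t (k + 1)) : ∃ z : ℤ, u 0 - v 0 = z := by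
  have hqt : ∀ k, q k = t k := by
    rintro (_ | k)
    exacts [hq.zero.trans ht.zero.symm, h k]
  have hfloor : ∀ k, ⌊u (k + 1)⌋ = ⌊v (k + 1)⌋ := by
    rintro (_ | k)
    · exact hq.one.symm.trans ((h 0).trans ht.one)
    · exact hq.partialQuot_eq ht (hqt k) (hqt (k + 1)) (hqt (k + 2))
  have h₁ : u 1 = v 1 := (hu.comp_add 1).eq_of_floor_eq (hv.comp_add 1)
    (hu.irrational hu₀ 1) (hv.irrational hv₀ 1) hfloor
  refine ⟨⌊u 0⌋ - ⌊v 0⌋, ?_⟩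
  have hu₁ := hu.floor_add_inv 0
  rw [h₁] at hu₁
  push_cast
  linarith [hv.floor_add_inv 0]

theorem exists_add_eq_intCast_of_denominators_eq_succ
    (hu : IsCompleteQuotients u) (hv : IsCompleteQuotients v)
    (hu₀ : Irrational (u 0)) (hv₀ : Irrational (v 0))
    (hq : IsDenominators (⌊u ·⌋) q) (ht : IsDenominators (⌊v ·⌋) t)
    (h : ∀ k, q (k + 1) = t (k + 2)) : ∃ z : ℤ, u 0 + v 0 = z := by
  have ht₁ : t 1 = 1 := by
    have hq₀ : q 0 < q 1 := by rw [hq.zero, h 0]; exact ht.one_lt 0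
    rw [← ht.emod_eq (ht.lt_succ le_rfl), ← h 0, ← h 1, hq.emod_eq hq₀, hq.zero]
  have hfloor₁ : ⌊v 1⌋ = 1 := ht.one ▸ ht₁
  have hfloor₂ : ⌊v 2⌋ = ⌊u 1⌋ - 1 := by
    have := ht.add_two 0
    rw [ht₁, ht.zero, ← h 0, hq.one] at this
    linarith
  have hfloor : ∀ k, ⌊u (k + 2)⌋ = ⌊v (k + 3)⌋ := by
    intro k
    refine hq.partialQuot_eq ht (n := k) (m := k + 1) ?_ (h k) (h (k + 1))
    rcases k with _ | k
    exacts [hq.zero.trans ht₁.symm, h k]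
  have h₃ : u 2 = v 3 := (hu.comp_add 2).eq_of_floor_eq (hv.comp_add 3)
    (hu.irrational hu₀ 2) (hv.irrational hv₀ 3) hfloor
  have hv₂ : v 2 = u 1 - 1 := by
    have hu₁ := hu.floor_add_inv 1
    have hv₂ := hv.floor_add_inv 2
    rw [hfloor₂, ← h₃] at hv₂
    push_cast at hv₂
    linarith
  have hv₁ : v 1 = 1 + (u 1 - 1)⁻¹ := by
    rw [← hv₂, ← hv.floor_add_inv 1, hfloor₁, Int.cast_one]
  have hu₁ : 1 < u 1 - 1 := hv₂ ▸ hv.one_lt hv₀ 1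
  have hinv : (v 1)⁻¹ = 1 - (u 1)⁻¹ := by
    rw [hv₁]
    have : u 1 ≠ 0 := by linarith
    have : u 1 - 1 ≠ 0 := by linarith
    field_simp
    ring
  refine ⟨⌊u 0⌋ + ⌊v 0⌋ + 1, ?_⟩
  push_cast
  linarith [hu.floor_add_inv 0, hv.floor_add_inv 0]

end

/-- Lemma 1: for irrationals `α, β` with `α ± β ∉ ℤ`, with convergent denominators
`q` and `t` respectively, only finitely many pairs `(n, m)` satisfy
`q n = t m` and `q (n+1) = t (m+1)`. -/
theorem stmt_5 (α β : ℝ) (hα : Irrational α) (hβ : Irrational β)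
    (hsum : ∀ k : ℤ, α + β ≠ (k : ℝ)) (hdiff : ∀ k : ℤ, α - β ≠ (k : ℝ))
    (tlα : ℕ → ℝ) (aα : ℕ → ℤ) (q : ℕ → ℤ)
    (htlα0 : tlα 0 = α)
    (htlα : ∀ r, tlα (r + 1) = (tlα r - (⌊tlα r⌋ : ℝ))⁻¹)
    (haα : ∀ r, aα r = ⌊tlα r⌋)
    (hq0 : q 0 = 1) (hq1 : q 1 = aα 1)
    (hqrec : ∀ k, q (k + 2) = aα (k + 2) * q (k + 1) + q k)
    (tlβ : ℕ → ℝ) (aβ : ℕ → ℤ) (t : ℕ → ℤ)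
    (htlβ0 : tlβ 0 = β)
    (htlβ : ∀ r, tlβ (r + 1) = (tlβ r - (⌊tlβ r⌋ : ℝ))⁻¹)
    (haβ : ∀ r, aβ r = ⌊tlβ r⌋)
    (ht0 : t 0 = 1) (ht1 : t 1 = aβ 1)
    (htrec : ∀ k, t (k + 2) = aβ (k + 2) * t (k + 1) + t k) :
    {p : ℕ × ℕ | q p.1 = t p.2 ∧ q (p.1 + 1) = t (p.2 + 1)}.Finite := by
  subst htlα0 htlβ0
  obtain rfl : aα = (⌊tlα ·⌋) := funext haα
  obtain rfl : aβ = (⌊tlβ ·⌋) := funext haβ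
  have hu : IsCompleteQuotients tlα := htlα
  have hv : IsCompleteQuotients tlβ := htlβ
  have hq : IsDenominators (⌊tlα ·⌋) q := ⟨hu.one_le_floor hα, hq0, hq1, hqrec⟩
  have ht : IsDenominators (⌊tlβ ·⌋) t := ⟨hv.one_le_floor hβ, ht0, ht1, htrec⟩
  obtain ⟨N₀, h₀⟩ : ∃ N, ¬ Coincide q t (N + 1) (N + 1) := by
    by_contra! h
    obtain ⟨z, hz⟩ := exists_sub_eq_intCast_of_denominators_eq hu hv hα hβ hq ht
      fun k => (h k).1
    exact hdiff z hz
  obtain ⟨N₁, h₁⟩ : ∃ N, ¬ Coincide q t (N + 1) (N + 2) := by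
    by_contra! h
    obtain ⟨z, hz⟩ := exists_add_eq_intCast_of_denominators_eq_succ hu hv hα hβ hq ht
      fun k => (h k).1
    exact hsum z hz
  obtain ⟨N₂, h₂⟩ : ∃ N, ¬ Coincide q t (N + 2) (N + 1) := by
    by_contra! h
    obtain ⟨z, hz⟩ := exists_add_eq_intCast_of_denominators_eq_succ hv hu hβ hα ht hq
      fun k => (h k).1.symm
    exact hsum z (by rw [add_comm, hz])
  exact hq.finite_setOf_coincide ht h₀ h₁ h₂
end

section
/- Let α, β be irrational with α ± β ∉ ℤ, with convergent denominators q_n and t_m and partial quotients a_n (for α). Then there are only finitely many pairs of indices (n, m) with q_n = t_{m+1}, q_{n+2} = t_{m+2}, and a_{n+2} = 1. -/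
/-!
Continuants `u (k + 2) = a (k + 2) * u (k + 1) + u k` with positive partial quotients increase,
so `u k` is the remainder of `u (k + 2)` modulo `u (k + 1)`. Hence if `t` and `q` agree at two
consecutive places `(i, k)`, `(i + 1, k + 1)`, they agree at all earlier ones, down to
`t 0 = 1 = q 0`; as `u j ≥ 2` for `j ≥ 2`, this forces `|i - k| ≤ 1`.

A coincidence `q n = t (m + 1)`, `q (n + 2) = t (m + 2)` with `a (n + 2) = 1` and `n ≥ 2` gives
such an alignment at `(m, n - 1)`, because `q (n + 2) = (a (n + 1) + 1) * q n + q (n - 1)`;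
so `m - n ∈ {-2, -1, 0}`. Two coincidences on the same diagonal are impossible: descending from
the later one gives `t (m + 2) = q (n + 1) < q (n + 1) + q n = q (n + 2)`. Finally, coincidences
with `n < 2` have `m < q 1` since `t` grows.
-/

theorem Int.eq_of_add_mul_eq_add_mul {r r' b c c' : ℤ} (hr : 0 ≤ r) (hrb : r < b) (hr' : 0 ≤ r')
    (hr'b : r' < b) (h : r + b * c = r' + b * c') : r = r' := by
  rw [← Int.emod_eq_of_lt hr hrb, ← Int.emod_eq_of_lt hr' hr'b, ← Int.add_mul_emod_self_left r b c,
    h, Int.add_mul_emod_self_left]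

theorem Irrational.one_le_floor_inv_fract {x : ℝ} (hx : Irrational x) : 1 ≤ ⌊(Int.fract x)⁻¹⌋ := by
  have hpos : 0 < Int.fract x := Int.fract_pos.2 (hx.ne_int _)
  rw [Int.le_floor, Int.cast_one, one_le_inv₀ hpos]
  exact (Int.fract_lt_one x).le

/-- `u` is the sequence of continuants `u k = K(a 1, …, a k)` of positive partial quotients
`a 1, a 2, …`; `a 0` plays no role. -/
structure IsContinuantDenoms (a u : ℕ → ℤ) : Prop where
  zero : u 0 = 1
  one : u 1 = a 1
  add_two : ∀ k, u (k + 2) = a (k + 2) * u (k + 1) + u k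
  one_le_quot : ∀ r, 1 ≤ a (r + 1)

theorem IsContinuantDenoms.of_tails {tl : ℕ → ℝ} {a u : ℕ → ℤ} (h0 : Irrational (tl 0))
    (htl : ∀ r, tl (r + 1) = (tl r - ⌊tl r⌋)⁻¹) (ha : ∀ r, a r = ⌊tl r⌋)
    (hu0 : u 0 = 1) (hu1 : u 1 = a 1) (hrec : ∀ k, u (k + 2) = a (k + 2) * u (k + 1) + u k) :
    IsContinuantDenoms a u := by
  have hirr : ∀ r, Irrational (tl r) := by
    intro r
    induction r with
    | zero => exact h0
    | succ r ih => rw [htl]; exact (ih.sub_intCast _).inv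
  refine ⟨hu0, hu1, hrec, fun r => ?_⟩
  rw [ha, htl, Int.self_sub_floor]
  exact (hirr r).one_le_floor_inv_fract

namespace IsContinuantDenoms

variable {a u : ℕ → ℤ} (h : IsContinuantDenoms a u)
include h

theorem one_le (k : ℕ) : 1 ≤ u k := by
  suffices ∀ k, 1 ≤ u k ∧ 1 ≤ u (k + 1) from (this k).1
  intro k
  induction k with
  | zero => exact ⟨h.zero.ge, h.one ▸ h.one_le_quot 0⟩
  | succ k ih =>
    refine ⟨ih.2, ?_⟩
    rw [h.add_two]
    nlinarith [h.one_le_quot (k + 1)]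

theorem nonneg (k : ℕ) : 0 ≤ u k := zero_le_one.trans (h.one_le k)

theorem add_le (k : ℕ) : u (k + 1) + u k ≤ u (k + 2) := by
  rw [h.add_two]
  nlinarith [h.one_le_quot (k + 1), h.one_le (k + 1)]

theorem le_succ (k : ℕ) : u k ≤ u (k + 1) := by
  cases k with
  | zero => simpa [h.zero] using h.one_le 1
  | succ k => linarith [h.add_le k, h.one_le k]

theorem two_le (k : ℕ) : 2 ≤ u (k + 2) := by
  linarith [h.add_le k, h.one_le k, h.one_le (k + 1)]

theorem lt_succ_of_two_le {k : ℕ} (hk : 2 ≤ u (k + 1)) : u k < u (k + 1) := by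
  cases k with
  | zero => rw [h.zero]; omega
  | succ k => linarith [h.add_le k, h.one_le k]

theorem natCast_le (k : ℕ) : (k : ℤ) ≤ u k := by
  induction k with
  | zero => exact (h.one_le 0).trans' (by norm_num)
  | succ k ih =>
    cases k with
    | zero => simpa using h.one_le 1
    | succ k => push_cast at ih ⊢; linarith [h.add_le k, h.one_le k]

end IsContinuantDenoms

def Aligned (t q : ℕ → ℤ) (i k : ℕ) : Prop := t i = q k ∧ t (i + 1) = q (k + 1)

theorem Aligned.symm {t q : ℕ → ℤ} {i k : ℕ} (h : Aligned t q i k) : Aligned q t k i :=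
  ⟨h.1.symm, h.2.symm⟩

section Alignment

variable {a b q t : ℕ → ℤ} (hq : IsContinuantDenoms a q) (ht : IsContinuantDenoms b t)
include hq ht

/-- `t (i + 2) = b (i + 2) * t (i + 1) + t i` is division with remainder by `t (i + 1)`
(unless `t (i + 1) = 1`), so the remainders `t i` and `q k` agree. -/
theorem Aligned.of_succ {i k : ℕ} (h : Aligned t q (i + 1) (k + 1)) : Aligned t q i k := by
  obtain ⟨h1, h2⟩ := h
  refine ⟨?_, h1⟩
  by_cases hone : t (i + 1) = 1
  · linarith [ht.le_succ i, ht.one_le i, hq.le_succ k, hq.one_le k]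
  have htwo : 2 ≤ t (i + 1) := by have := ht.one_le (i + 1); omega
  refine Int.eq_of_add_mul_eq_add_mul (ht.nonneg i) (ht.lt_succ_of_two_le htwo) (hq.nonneg k)
    (h1 ▸ hq.lt_succ_of_two_le (h1 ▸ htwo)) (c := b (i + 2)) (c' := a (k + 2)) ?_
  rw [mul_comm, add_comm, ← ht.add_two, h2, hq.add_two, h1]; ring

theorem Aligned.of_add {i k : ℕ} : ∀ j, Aligned t q (i + j) (k + j) → Aligned t q i k := by
  intro j
  induction j with
  | zero => exact id
  | succ j ih => exact fun h => ih (Aligned.of_succ hq ht h)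

theorem Aligned.le_add_one {i k : ℕ} (h : Aligned t q i k) : k ≤ i + 1 := by
  by_contra! hik
  obtain ⟨j, rfl⟩ : ∃ j, k = j + 2 + i := ⟨k - (i + 2), by omega⟩
  have h0 := (Aligned.of_add hq ht (i := 0) (k := j + 2) i (by simpa [add_comm] using h)).1
  linarith [ht.zero, hq.two_le j]

theorem Aligned.of_coincidence {n m : ℕ} (h1 : q (n + 2) = t (m + 1))
    (h2 : q (n + 4) = t (m + 2)) (h3 : a (n + 4) = 1) : Aligned t q m (n + 1) := by
  refine ⟨?_, h1.symm⟩
  have hdiv : q (n + 1) + t (m + 1) * (a (n + 3) + 1) = t m + t (m + 1) * b (m + 2) :=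
    calc _ = q (n + 4) := by rw [hq.add_two, h3, hq.add_two (n + 1), ← h1]; ring
      _ = t (m + 2) := h2
      _ = _ := by rw [ht.add_two]; ring
  have htwo : 2 ≤ t (m + 1) := h1 ▸ hq.two_le n
  have hlt : q (n + 1) < t (m + 1) := h1 ▸ hq.lt_succ_of_two_le (hq.two_le n)
  exact (Int.eq_of_add_mul_eq_add_mul (hq.nonneg _) hlt (ht.nonneg m)
    (ht.lt_succ_of_two_le htwo) hdiv).symm

end Alignment

theorem not_aligned_succ_of_coincidence {a q t : ℕ → ℤ} (hq : IsContinuantDenoms a q) {n m : ℕ}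
    (h2 : q (n + 4) = t (m + 2)) (h3 : a (n + 4) = 1) : ¬ Aligned t q (m + 1) (n + 2) := by
  rintro ⟨-, h⟩
  have := hq.add_two (n + 2)
  rw [h3] at this
  linarith [hq.one_le (n + 2)]

def coincidenceSet (a q t : ℕ → ℤ) : Set (ℕ × ℕ) :=
  {p | q p.1 = t (p.2 + 1) ∧ q (p.1 + 2) = t (p.2 + 2) ∧ a (p.1 + 2) = 1}

section Coincidences

variable {a b q t : ℕ → ℤ} (hq : IsContinuantDenoms a q) (ht : IsContinuantDenoms b t)
include hq ht

theorem finite_coincidenceSet_inter_fst_lt_two :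
    (coincidenceSet a q t ∩ {p | p.1 < 2}).Finite := by
  refine ((Set.finite_Iio 2).prod (Set.finite_Iio (q 1).toNat)).subset ?_
  rintro ⟨n, m⟩ ⟨⟨h1 : q n = t (m + 1), -, -⟩, hn : n < 2⟩
  have hqn : q n ≤ q 1 := by
    interval_cases n
    exacts [hq.le_succ 0, le_rfl]
  have := ht.natCast_le (m + 1)
  simp only [Set.mem_prod, Set.mem_Iio]
  push_cast at this
  omega

theorem aligned_of_mem_coincidenceSet {n m : ℕ} (h : (n + 2, m) ∈ coincidenceSet a q t) :
    Aligned t q m (n + 1) :=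
  Aligned.of_coincidence hq ht h.1 h.2.1 h.2.2

theorem le_and_le_of_mem_coincidenceSet {n m : ℕ} (h : (n + 2, m) ∈ coincidenceSet a q t) :
    n ≤ m ∧ m ≤ n + 2 := by
  have hal := aligned_of_mem_coincidenceSet hq ht h
  exact ⟨by simpa using Aligned.le_add_one hq ht hal, Aligned.le_add_one ht hq hal.symm⟩

theorem eq_of_mem_coincidenceSet {n m n' m' : ℕ} (h : (n + 2, m) ∈ coincidenceSet a q t)
    (h' : (n' + 2, m') ∈ coincidenceSet a q t) (hd : n + m' = n' + m) (hm : m ≤ m') : m = m' := by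
  by_contra hne
  obtain ⟨j, rfl⟩ : ∃ j, m' = m + 1 + j := ⟨m' - (m + 1), by omega⟩
  obtain rfl : n' = n + 1 + j := by omega
  have hal := aligned_of_mem_coincidenceSet hq ht h'
  rw [show n + 1 + j + 1 = n + 2 + j by omega] at hal
  exact not_aligned_succ_of_coincidence hq h.2.1 h.2.2 (Aligned.of_add hq ht j hal)

theorem finite_shifted_coincidenceSet :
    {p : ℕ × ℕ | (p.1 + 2, p.2) ∈ coincidenceSet a q t}.Finite := by
  refine Set.Finite.of_finite_image (f := fun p => (p.2 : ℤ) - p.1)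
    ((Set.finite_Icc (0 : ℤ) 2).subset ?_) ?_
  · rintro _ ⟨⟨n, m⟩, h, rfl⟩
    have := le_and_le_of_mem_coincidenceSet hq ht h
    simp only [Set.mem_Icc]
    omega
  · rintro ⟨n, m⟩ h ⟨n', m'⟩ h' hd
    simp only at hd
    rcases le_total m m' with hm | hm
    · have := eq_of_mem_coincidenceSet hq ht h h' (by omega) hm
      simp only [Prod.mk.injEq]
      omega
    · have := eq_of_mem_coincidenceSet hq ht h' h (by omega) hm
      simp only [Prod.mk.injEq]
      omega

theorem finite_coincidenceSet : (coincidenceSet a q t).Finite := by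
  refine ((finite_coincidenceSet_inter_fst_lt_two hq ht).union
    ((finite_shifted_coincidenceSet hq ht).image fun p => (p.1 + 2, p.2))).subset ?_
  rintro ⟨n, m⟩ h
  rcases lt_or_ge n 2 with hn | hn
  · exact Or.inl ⟨h, hn⟩
  · obtain ⟨n, rfl⟩ := Nat.exists_eq_add_of_le' hn
    exact Or.inr ⟨(n, m), h, rfl⟩

end Coincidences

theorem stmt_6_general (α β : ℝ) (hα : Irrational α) (hβ : Irrational β)
    (tlα : ℕ → ℝ) (aα : ℕ → ℤ) (q : ℕ → ℤ)
    (htlα0 : tlα 0 = α)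
    (htlα : ∀ r, tlα (r + 1) = (tlα r - (⌊tlα r⌋ : ℝ))⁻¹)
    (haα : ∀ r, aα r = ⌊tlα r⌋)
    (hq0 : q 0 = 1) (hq1 : q 1 = aα 1)
    (hqrec : ∀ k, q (k + 2) = aα (k + 2) * q (k + 1) + q k)
    (tlβ : ℕ → ℝ) (aβ : ℕ → ℤ) (t : ℕ → ℤ)
    (htlβ0 : tlβ 0 = β)
    (htlβ : ∀ r, tlβ (r + 1) = (tlβ r - (⌊tlβ r⌋ : ℝ))⁻¹)
    (haβ : ∀ r, aβ r = ⌊tlβ r⌋)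
    (ht0 : t 0 = 1) (ht1 : t 1 = aβ 1)
    (htrec : ∀ k, t (k + 2) = aβ (k + 2) * t (k + 1) + t k) :
    {p : ℕ × ℕ | q p.1 = t (p.2 + 1) ∧ q (p.1 + 2) = t (p.2 + 2) ∧ aα (p.1 + 2) = 1}.Finite := by
  have hq := IsContinuantDenoms.of_tails (htlα0 ▸ hα) htlα haα hq0 hq1 hqrec
  have ht := IsContinuantDenoms.of_tails (htlβ0 ▸ hβ) htlβ haβ ht0 ht1 htrec
  exact finite_coincidenceSet hq ht

/-- Lemma 2: for irrationals `α, β` with `α ± β ∉ ℤ`, with convergent denominators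
`q` and `t` respectively, only finitely many pairs `(n, m)` satisfy
`q n = t (m+1)`, `q (n+2) = t (m+2)` and `a (n+2) = 1`. -/
theorem stmt_6 (α β : ℝ) (hα : Irrational α) (hβ : Irrational β)
    (hsum : ∀ k : ℤ, α + β ≠ (k : ℝ)) (hdiff : ∀ k : ℤ, α - β ≠ (k : ℝ))
    (tlα : ℕ → ℝ) (aα : ℕ → ℤ) (q : ℕ → ℤ)
    (htlα0 : tlα 0 = α)
    (htlα : ∀ r, tlα (r + 1) = (tlα r - (⌊tlα r⌋ : ℝ))⁻¹)
    (haα : ∀ r, aα r = ⌊tlα r⌋)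
    (hq0 : q 0 = 1) (hq1 : q 1 = aα 1)
    (hqrec : ∀ k, q (k + 2) = aα (k + 2) * q (k + 1) + q k)
    (tlβ : ℕ → ℝ) (aβ : ℕ → ℤ) (t : ℕ → ℤ)
    (htlβ0 : tlβ 0 = β)
    (htlβ : ∀ r, tlβ (r + 1) = (tlβ r - (⌊tlβ r⌋ : ℝ))⁻¹)
    (haβ : ∀ r, aβ r = ⌊tlβ r⌋)
    (ht0 : t 0 = 1) (ht1 : t 1 = aβ 1)
    (htrec : ∀ k, t (k + 2) = aβ (k + 2) * t (k + 1) + t k) :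
    {p : ℕ × ℕ | q p.1 = t (p.2 + 1) ∧ q (p.1 + 2) = t (p.2 + 2) ∧ aα (p.1 + 2) = 1}.Finite :=
  stmt_6_general α β hα hβ tlα aα q htlα0 htlα haα hq0 hq1 hqrec tlβ aβ t htlβ0 htlβ haβ ht0 ht1
    htrec
end

section
/- Let α, β be irrational numbers with convergent denominators q_n, t_s, complete quotients α_r, β_r, and put ξ_n = ‖q_n α‖, η_s = ‖t_s β‖. If η_s ∈ (ξ_n, ξ_{n−1}), then either 1/η_s − 1/ξ_{n−1} ≥ t_s(β_{s+1} + t_{s−1}/t_s)(1 − 1/√(α_{n+1})), or 1/ξ_n − 1/η_s ≥ q_n(α_{n+1} + q_{n−1}/q_n)(1 − 1/√(α_{n+1})). -/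
/-- Distance from a real number to the nearest integer. -/
noncomputable def dnint (x : ℝ) : ℝ := |x - round x|

/-!
Write `ξ_k = ‖q_k α‖` and `η = ‖t_s β‖`. The identity `1/ξ_k = q_k α_{k+1} + q_{k-1}` turns both
right-hand sides into `(1/η)(1 - 1/√α_{n+1})` and `(1/ξ_n)(1 - 1/√α_{n+1})`, and
`1/ξ_n = α_{n+1} / ξ_{n-1}`. If both alternatives failed we would have
`1/η < √α_{n+1} / ξ_{n-1}` and `1/ξ_n < √α_{n+1} / η`, whence `1/ξ_n < α_{n+1} / ξ_{n-1} = 1/ξ_n`.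
-/

open Real

theorem dnint_eq_abs_sub_of_abs_sub_lt_half {y : ℝ} {m : ℤ} (h : |y - m| < 1 / 2) :
    dnint y = |y - m| := by
  rw [abs_lt] at h
  rw [dnint, (round_eq_iff (n := m)).2 ⟨by linarith, by linarith⟩]

theorem sub_ge_mul_one_sub_one_div_or_of_sq_mul_le {a b c s : ℝ} (hs : 0 < s)
    (hab : s ^ 2 * b ≤ a) :
    c - b ≥ c * (1 - 1 / s) ∨ a - c ≥ a * (1 - 1 / s) := by
  by_contra! hcon
  obtain ⟨hcb, hac⟩ := hcon
  have hc : c < b * s := by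
    rwa [mul_one_sub, sub_lt_sub_iff_left, ← div_eq_mul_one_div, div_lt_iff₀ hs] at hcb
  have ha : a < c * s := by
    rwa [mul_one_sub, sub_lt_sub_iff_left, ← div_eq_mul_one_div, div_lt_iff₀ hs] at hac
  nlinarith [mul_lt_mul_of_pos_right hc hs]

/-- `tl r` are the complete quotients `x_r` of `x`, `a r` its partial quotients and `q k` the
denominators of its convergents. -/
structure IsContFracExpansion (x : ℝ) (tl : ℕ → ℝ) (a q : ℕ → ℤ) : Prop where
  tail_zero : tl 0 = x
  tail_succ : ∀ r, tl (r + 1) = (tl r - ⌊tl r⌋)⁻¹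
  digit_eq : ∀ r, a r = ⌊tl r⌋
  denom_zero : q 0 = 1
  denom_one : q 1 = a 1
  denom_add_two : ∀ k, q (k + 2) = a (k + 2) * q (k + 1) + q k

def convNum (a : ℕ → ℤ) : ℕ → ℤ
  | 0 => a 0
  | 1 => a 1 * a 0 + 1
  | k + 2 => a (k + 2) * convNum a (k + 1) + convNum a k

def convErr (x : ℝ) (a q : ℕ → ℤ) (k : ℕ) : ℝ := q k * x - convNum a k

namespace IsContFracExpansion

variable {x : ℝ} {tl : ℕ → ℝ} {a q : ℕ → ℤ}

theorem irrational_tail (h : IsContFracExpansion x tl a q) (hx : Irrational x) :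
    ∀ r, Irrational (tl r)
  | 0 => h.tail_zero ▸ hx
  | r + 1 => h.tail_succ r ▸ ((h.irrational_tail hx r).sub_intCast _).inv

theorem one_lt_tail (h : IsContFracExpansion x tl a q) (hx : Irrational x) (r : ℕ) :
    1 < tl (r + 1) := by
  rw [h.tail_succ, Int.self_sub_floor]
  exact (one_lt_inv₀ (Int.fract_pos.2 ((h.irrational_tail hx r).ne_int _))).2 (Int.fract_lt_one _)

theorem tail_pos (h : IsContFracExpansion x tl a q) (hx : Irrational x) (r : ℕ) :
    0 < tl (r + 1) :=
  one_pos.trans (h.one_lt_tail hx r)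

theorem tail_eq_digit_add_inv (h : IsContFracExpansion x tl a q) (r : ℕ) :
    tl r = a r + (tl (r + 1))⁻¹ := by
  rw [h.tail_succ, inv_inv, h.digit_eq]
  ring

theorem one_le_digit (h : IsContFracExpansion x tl a q) (hx : Irrational x) (r : ℕ) :
    1 ≤ a (r + 1) := by
  rw [h.digit_eq]
  exact Int.le_floor.2 (by exact_mod_cast (h.one_lt_tail hx r).le)

theorem one_le_denom (h : IsContFracExpansion x tl a q) (hx : Irrational x) (k : ℕ) :
    1 ≤ q k := by
  suffices ∀ k, 1 ≤ q k ∧ 1 ≤ q (k + 1) from (this k).1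
  intro k
  induction k with
  | zero => exact ⟨h.denom_zero.ge, h.denom_one ▸ h.one_le_digit hx 0⟩
  | succ k ih =>
    refine ⟨ih.2, ?_⟩
    rw [h.denom_add_two]
    nlinarith [h.one_le_digit hx (k + 1)]

theorem convErr_zero (h : IsContFracExpansion x tl a q) : convErr x a q 0 = (tl 1)⁻¹ := by
  rw [convErr, convNum, h.denom_zero, h.tail_succ, inv_inv, h.digit_eq, h.tail_zero]
  push_cast
  ring

theorem convErr_succ_mul_tail (h : IsContFracExpansion x tl a q) (hx : Irrational x) :
    ∀ k, convErr x a q (k + 1) * tl (k + 2) = -convErr x a q k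
  | 0 => by
    show convErr x a q 1 * tl 2 = -convErr x a q 0
    have hx0 : x = a 0 + (tl 1)⁻¹ := h.tail_zero ▸ h.tail_eq_digit_add_inv 0
    simp only [convErr, convNum, h.denom_zero, h.denom_one]
    have hinv1 : tl 1 * (tl 1)⁻¹ = 1 := mul_inv_cancel₀ (h.tail_pos hx 0).ne'
    have hinv2 : tl 2 * (tl 2)⁻¹ = 1 := mul_inv_cancel₀ (h.tail_pos hx 1).ne'
    rw [hx0]
    push_cast
    linear_combination
      tl 2 * hinv1 - (tl 1)⁻¹ * hinv2 - (tl 1)⁻¹ * tl 2 * h.tail_eq_digit_add_inv 1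
  | k + 1 => by
    have hrec : convErr x a q (k + 2) = a (k + 2) * convErr x a q (k + 1) + convErr x a q k := by
      simp only [convErr, convNum, h.denom_add_two]
      push_cast
      ring
    have hprev := h.convErr_succ_mul_tail hx k
    have hinv : tl (k + 3) * (tl (k + 3))⁻¹ = 1 := mul_inv_cancel₀ (h.tail_pos hx (k + 2)).ne'
    show convErr x a q (k + 2) * tl (k + 3) = -convErr x a q (k + 1)
    rw [hrec]
    linear_combination tl (k + 3) * hprev - convErr x a q (k + 1) * tl (k + 3) *
      h.tail_eq_digit_add_inv (k + 2) - convErr x a q (k + 1) * hinv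

theorem abs_convErr_succ (h : IsContFracExpansion x tl a q) (hx : Irrational x) (k : ℕ) :
    |convErr x a q (k + 1)| = |convErr x a q k| / tl (k + 2) := by
  rw [eq_div_iff (h.tail_pos hx (k + 1)).ne', ← abs_of_pos (h.tail_pos hx (k + 1)), ← abs_mul,
    h.convErr_succ_mul_tail hx, abs_neg]

theorem inv_abs_convErr_succ (h : IsContFracExpansion x tl a q) (hx : Irrational x) :
    ∀ k, |convErr x a q (k + 1)|⁻¹ = tl (k + 2) * q (k + 1) + q k
  | 0 => by
    rw [h.abs_convErr_succ hx, h.convErr_zero, abs_of_pos (inv_pos.2 (h.tail_pos hx 0)),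
      inv_div, div_inv_eq_mul, h.tail_eq_digit_add_inv 1, h.denom_one, h.denom_zero]
    have htl2 := (h.tail_pos hx 1).ne'
    push_cast
    field_simp
  | k + 1 => by
    rw [h.abs_convErr_succ hx, inv_div, div_eq_mul_inv, h.inv_abs_convErr_succ hx k,
      h.tail_eq_digit_add_inv (k + 2), h.denom_add_two]
    have htl := (h.tail_pos hx (k + 2)).ne'
    push_cast
    field_simp
    ring

theorem abs_convErr_succ_lt_half (h : IsContFracExpansion x tl a q) (hx : Irrational x) (k : ℕ) :
    |convErr x a q (k + 1)| < 1 / 2 := by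
  have hq : (1 : ℝ) ≤ q (k + 1) := by exact_mod_cast h.one_le_denom hx (k + 1)
  have hq' : (1 : ℝ) ≤ q k := by exact_mod_cast h.one_le_denom hx k
  have h2 : 2 < |convErr x a q (k + 1)|⁻¹ := by
    rw [h.inv_abs_convErr_succ hx]
    nlinarith [h.one_lt_tail hx (k + 1)]
  rw [← inv_inv |convErr x a q (k + 1)|, one_div]
  exact inv_strictAnti₀ two_pos h2

theorem dnint_denom_succ (h : IsContFracExpansion x tl a q) (hx : Irrational x) (k : ℕ) :
    dnint (q (k + 1) * x) = |convErr x a q (k + 1)| :=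
  dnint_eq_abs_sub_of_abs_sub_lt_half (h.abs_convErr_succ_lt_half hx k)

/-- When `{x} > 1/2`, `‖x‖ = 1 - {x}` rather than `{x} = |q_0 x - p_0|`; but then `a_1 = 1`, so
`q_1 = q_0`, contradicting `h01`. -/
theorem dnint_denom_zero_of_lt (h : IsContFracExpansion x tl a q) (hx : Irrational x)
    (h01 : dnint (q 1 * x) < dnint (q 0 * x)) : dnint (q 0 * x) = |convErr x a q 0| := by
  have hq0 : (q 0 : ℝ) = 1 := by exact_mod_cast h.denom_zero
  have hfract : (tl 1)⁻¹ = Int.fract x := by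
    rw [h.tail_succ, inv_inv, h.tail_zero, Int.self_sub_floor]
  rw [h.convErr_zero, abs_of_pos (inv_pos.2 (h.tail_pos hx 0)), hfract, hq0, one_mul, dnint,
    abs_sub_round_eq_min, min_eq_left_iff]
  by_contra! hgt
  have htl2 : tl 1 < 2 := by
    rw [← inv_inv (tl 1), hfract]
    exact inv_lt_of_inv_lt₀ two_pos (by linarith)
  have ha1 : a 1 = 1 := by
    rw [h.digit_eq, Int.floor_eq_iff]
    exact ⟨by exact_mod_cast (h.one_lt_tail hx 0).le, by push_cast; linarith⟩
  rw [h.denom_one, ha1, h.denom_zero] at h01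
  exact lt_irrefl _ h01

theorem dnint_denom_eq_abs_convErr (h : IsContFracExpansion x tl a q) (hx : Irrational x) :
    ∀ k, dnint (q (k + 1) * x) < dnint (q k * x) → dnint (q k * x) = |convErr x a q k|
  | 0, h01 => h.dnint_denom_zero_of_lt hx h01
  | k + 1, _ => h.dnint_denom_succ hx k

theorem inv_dnint_denom_succ (h : IsContFracExpansion x tl a q) (hx : Irrational x) (k : ℕ) :
    (dnint (q (k + 1) * x))⁻¹ = tl (k + 2) * q (k + 1) + q k := by
  rw [h.dnint_denom_succ hx, h.inv_abs_convErr_succ hx]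

theorem inv_dnint_denom_succ_eq_tail_mul (h : IsContFracExpansion x tl a q) (hx : Irrational x)
    (k : ℕ) (hk : dnint (q (k + 1) * x) < dnint (q k * x)) :
    (dnint (q (k + 1) * x))⁻¹ = tl (k + 2) * (dnint (q k * x))⁻¹ := by
  rw [h.dnint_denom_succ hx, h.dnint_denom_eq_abs_convErr hx k hk, h.abs_convErr_succ hx, inv_div,
    div_eq_mul_inv]

theorem denom_mul_tail_add_div (h : IsContFracExpansion x tl a q) (hx : Irrational x) (k : ℕ) :
    q (k + 1) * (tl (k + 2) + q k / q (k + 1)) = 1 / dnint (q (k + 1) * x) := by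
  have hq : (q (k + 1) : ℝ) ≠ 0 := by
    have : (1 : ℝ) ≤ q (k + 1) := by exact_mod_cast h.one_le_denom hx (k + 1)
    positivity
  rw [one_div, h.inv_dnint_denom_succ hx]
  field_simp

end IsContFracExpansion

/-- Lemma 3 of the paper: if `η_s ∈ (ξ_n, ξ_{n-1})`, then either
`1/η_s - 1/ξ_{n-1} ≥ t_s (β_{s+1} + t_{s-1}/t_s)(1 - 1/√α_{n+1})` or
`1/ξ_n - 1/η_s ≥ q_n (α_{n+1} + q_{n-1}/q_n)(1 - 1/√α_{n+1})`
(stated with `n, s` replaced by `n + 1, s + 1`). -/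
theorem stmt_7 (α β : ℝ) (hα : Irrational α) (hβ : Irrational β)
    (tlα : ℕ → ℝ) (aα : ℕ → ℤ) (q : ℕ → ℤ)
    (htlα0 : tlα 0 = α)
    (htlα : ∀ r, tlα (r + 1) = (tlα r - (⌊tlα r⌋ : ℝ))⁻¹)
    (haα : ∀ r, aα r = ⌊tlα r⌋)
    (hq0 : q 0 = 1) (hq1 : q 1 = aα 1)
    (hqrec : ∀ k, q (k + 2) = aα (k + 2) * q (k + 1) + q k)
    (tlβ : ℕ → ℝ) (aβ : ℕ → ℤ) (t : ℕ → ℤ)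
    (htlβ0 : tlβ 0 = β)
    (htlβ : ∀ r, tlβ (r + 1) = (tlβ r - (⌊tlβ r⌋ : ℝ))⁻¹)
    (haβ : ∀ r, aβ r = ⌊tlβ r⌋)
    (ht0 : t 0 = 1) (ht1 : t 1 = aβ 1)
    (htrec : ∀ k, t (k + 2) = aβ (k + 2) * t (k + 1) + t k)
    (n s : ℕ)
    (hlow : dnint ((q (n + 1) : ℝ) * α) < dnint ((t (s + 1) : ℝ) * β))
    (hhigh : dnint ((t (s + 1) : ℝ) * β) < dnint ((q n : ℝ) * α)) :
    1 / dnint ((t (s + 1) : ℝ) * β) - 1 / dnint ((q n : ℝ) * α) ≥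
      (t (s + 1) : ℝ) * (tlβ (s + 2) + (t s : ℝ) / (t (s + 1) : ℝ)) *
        (1 - 1 / Real.sqrt (tlα (n + 2))) ∨
    1 / dnint ((q (n + 1) : ℝ) * α) - 1 / dnint ((t (s + 1) : ℝ) * β) ≥
      (q (n + 1) : ℝ) * (tlα (n + 2) + (q n : ℝ) / (q (n + 1) : ℝ)) *
        (1 - 1 / Real.sqrt (tlα (n + 2))) := by
  have hαcf : IsContFracExpansion α tlα aα q := ⟨htlα0, htlα, haα, hq0, hq1, hqrec⟩
  have hβcf : IsContFracExpansion β tlβ aβ t := ⟨htlβ0, htlβ, haβ, ht0, ht1, htrec⟩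
  have hratio := hαcf.inv_dnint_denom_succ_eq_tail_mul hα n (hlow.trans hhigh)
  have hsq : √(tlα (n + 2)) ^ 2 = tlα (n + 2) := sq_sqrt (hαcf.tail_pos hα (n + 1)).le
  rw [hαcf.denom_mul_tail_add_div hα, hβcf.denom_mul_tail_add_div hβ]
  refine sub_ge_mul_one_sub_one_div_or_of_sq_mul_le (sqrt_pos.2 (hαcf.tail_pos hα (n + 1))) ?_
  rw [hsq, one_div, one_div, hratio]
end

section
/- Let q_{n+1}, q_n, t_{s+1}, t_s be positive reals and k, m positive integers with q_{n+1} F_{k+1} + q_n F_k = t_{s+1} F_{m+1} + t_s F_m, where F_j is the j-th Fibonacci number, and suppose t_s = q_n. If t_{s+1} > q_{n+1}, then m ≤ k − 1. -/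
/-- If `q_{n+1} F_{k+1} + q_n F_k = t_{s+1} F_{m+1} + t_s F_m` with `t_s = q_n`
positive reals and `k, m ≥ 1`, then `t_{s+1} > q_{n+1}` forces `m ≤ k - 1`. -/
theorem stmt_10 (qn qn1 ts ts1 : ℝ) (hqn : 0 < qn) (hqn1 : 0 < qn1)
    (hts : 0 < ts) (hts1 : 0 < ts1) (k m : ℕ) (hk : 1 ≤ k) (hm : 1 ≤ m)
    (heq : qn1 * (Nat.fib (k + 1) : ℝ) + qn * (Nat.fib k : ℝ) =
      ts1 * (Nat.fib (m + 1) : ℝ) + ts * (Nat.fib m : ℝ))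
    (hts_eq : ts = qn)
    (hgt : ts1 > qn1) :
    m ≤ k - 1 := by
  by_contra h
  push_neg at h
  have hkm : k ≤ m := by omega
  have h1 : (Nat.fib (k + 1) : ℝ) ≤ (Nat.fib (m + 1) : ℝ) := by
    exact_mod_cast Nat.fib_mono (by omega)
  have h2 : (Nat.fib k : ℝ) ≤ (Nat.fib m : ℝ) := by
    exact_mod_cast Nat.fib_mono hkm
  have hfpos : (0 : ℝ) < Nat.fib (k + 1) := by
    exact_mod_cast Nat.fib_pos.2 (by omega)
  nlinarith [hfpos, h1, h2]
end
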